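/- Let n₀ ≥ 1 and η ≥ 2 be integers. Then 𝔼[ 1 + Σ_{t=1}^{n₀−1} 1_{F_t} + Σ_{k=1}^∞ n₀ (η^k − η^{k−1}) · 1_{F_{n₀ η^{k−1}}} ] ≤ 1 + (1 + A) S (1 − e^{−c n₀})/(e^{c} − 1) + (η − 1)(1 + A) S n₀ σ, where c = Δ₁²/(2B₀²) and σ = Σ_{k=0}^∞ η^k e^{−c n₀ η^k} < ∞. (This bounds the expected number of slots in which Epoch-LPSM plays a non-optimal policy: it can err at each of the first n₀ slots where F_t occurs, and during the whole k-th epoch, of length n₀(η^k − η^{k−1}), if F occurs at the epoch's starting slot n₀ η^{k−1}.) -/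

import Mathlib

open MeasureTheory ProbabilityTheory Real

open scoped ENNReal


/-- Core analytic inequality behind Hoeffding's lemma. -/
lemma hoeffding_phi_le (p : ℝ) (hp0 : 0 ≤ p) (hp1 : p ≤ 1) (h : ℝ) :
    Real.log (1 - p + p * Real.exp h) ≤ p * h + h ^ 2 / 8 := by
  set D : ℝ → ℝ := fun x => 1 - p + p * Real.exp x with hDdef
  have hDpos : ∀ x, 0 < D x := by
    intro x
    rcases eq_or_lt_of_le hp1 with h1 | h1
    · have : D x = Real.exp x := by simp [hDdef, ← h1]
      rw [this]; positivity
    · have : 0 < 1 - p := by linarith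
      have : 0 ≤ p * Real.exp x := by positivity
      simp only [hDdef]; linarith
  have hD' : ∀ x, HasDerivAt D (p * Real.exp x) x := fun x =>
    ((Real.hasDerivAt_exp x).const_mul p).const_add (1 - p)
  set G : ℝ → ℝ := fun x => p + x / 4 - p * Real.exp x / D x with hGdef
  set g : ℝ → ℝ := fun x => p * x + x ^ 2 / 8 - Real.log (D x) with hgdef
  have hg' : ∀ x, HasDerivAt g (G x) x := by
    intro x
    have h1 : HasDerivAt (fun x : ℝ => p * x + x ^ 2 / 8) (p + x / 4) x := by
      have := ((hasDerivAt_id x).const_mul p).add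
        ((hasDerivAt_pow 2 x).div_const 8)
      exact this.congr_deriv (by norm_num; ring)
    have h2 : HasDerivAt (fun x => Real.log (D x)) (p * Real.exp x / D x) x :=
      (hD' x).log (hDpos x).ne'
    exact h1.sub h2
  have hG' : ∀ x, HasDerivAt G
      (1 / 4 - (p * Real.exp x * D x - p * Real.exp x * (p * Real.exp x)) / (D x) ^ 2) x := by
    intro x
    have h2 : HasDerivAt (fun x => p * Real.exp x / D x)
        ((p * Real.exp x * D x - p * Real.exp x * (p * Real.exp x)) / (D x) ^ 2) x :=
      ((Real.hasDerivAt_exp x).const_mul p).div (hD' x) (hDpos x).ne'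
    have h1 : HasDerivAt (fun x : ℝ => p + x / 4) (1 / 4) x :=
      ((hasDerivAt_id x).div_const 4).const_add p
    exact h1.sub h2
  have hGderiv_nonneg : ∀ x,
      0 ≤ 1 / 4 - (p * Real.exp x * D x - p * Real.exp x * (p * Real.exp x)) / (D x) ^ 2 := by
    intro x
    have hD := hDpos x
    have key : (p * Real.exp x * D x - p * Real.exp x * (p * Real.exp x)) / (D x) ^ 2 ≤ 1 / 4 := by
      rw [div_le_iff₀ (by positivity)]
      nlinarith [sq_nonneg (D x / 2 - p * Real.exp x)]
    linarith
  have hGmono : Monotone G := by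
    have hdiff : Differentiable ℝ G := fun x => (hG' x).differentiableAt
    refine monotone_of_deriv_nonneg hdiff ?_
    intro x
    rw [(hG' x).deriv]
    exact hGderiv_nonneg x
  have hG0 : G 0 = 0 := by
    simp [hGdef, hDdef]
  have hg0 : g 0 = 0 := by
    simp [hgdef, hDdef]
  -- g x ≥ 0 for all x
  have hgnonneg : ∀ x, 0 ≤ g x := by
    intro x
    rcases le_total 0 x with hx | hx
    · have hmono : MonotoneOn g (Set.Ici 0) := by
        refine monotoneOn_of_deriv_nonneg (convex_Ici 0)
          (fun y _ => (hg' y).differentiableAt.continuousAt.continuousWithinAt)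
          (fun y _ => (hg' y).differentiableAt.differentiableWithinAt) ?_
        intro y hy
        rw [(hg' y).deriv]
        rw [interior_Ici] at hy
        have : G 0 ≤ G y := hGmono (le_of_lt hy)
        rw [hG0] at this; exact this
      have := hmono (Set.self_mem_Ici) hx hx
      rwa [hg0] at this
    · have hanti : AntitoneOn g (Set.Iic 0) := by
        refine antitoneOn_of_deriv_nonpos (convex_Iic 0)
          (fun y _ => (hg' y).differentiableAt.continuousAt.continuousWithinAt)
          (fun y _ => (hg' y).differentiableAt.differentiableWithinAt) ?_
        intro y hy
        rw [(hg' y).deriv]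
        rw [interior_Iic] at hy
        have : G y ≤ G 0 := hGmono (le_of_lt hy)
        rw [hG0] at this; exact this
      have := hanti hx (Set.self_mem_Iic) hx
      rwa [hg0] at this
    
  have := hgnonneg h
  simp only [hgdef] at this
  linarith


/-- Hoeffding's lemma. -/
lemma hoeffding_mgf_le {Ω : Type*} [MeasurableSpace Ω] (μ : Measure Ω)
    [IsProbabilityMeasure μ] (Y : Ω → ℝ) (hY : Measurable Y) (a b : ℝ)
    (hbd : ∀ ω, Y ω ∈ Set.Icc a b) (hmean : ∫ ω, Y ω ∂μ = 0) (l : ℝ) :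
    mgf Y μ l ≤ Real.exp (l ^ 2 * (b - a) ^ 2 / 8) := by
  have hne : Nonempty Ω := by
    by_contra hc
    rw [not_nonempty_iff] at hc
    have := measure_univ (μ := μ); simp [Set.univ_eq_empty_iff.2 hc] at this
  obtain ⟨ω₀⟩ := hne
  have hab : a ≤ b := le_trans (hbd ω₀).1 (hbd ω₀).2
  have hYint : Integrable Y μ := by
    refine (integrable_const (max |a| |b|)).mono' hY.aestronglyMeasurable ?_
    filter_upwards with ω
    rw [Real.norm_eq_abs, abs_le]
    constructor
    · have := (hbd ω).1
      have : -(max |a| |b|) ≤ a := by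
        have := neg_abs_le a
        have := le_max_left |a| |b|
        linarith
      linarith [(hbd ω).1]
    · have : b ≤ max |a| |b| := le_trans (le_abs_self b) (le_max_right _ _)
      linarith [(hbd ω).2]
  rcases eq_or_lt_of_le hab with heq | hlt
  · -- a = b, then Y = a everywhere and a = 0
    have ha0 : a = 0 := by
      have h1 : ∀ ω, Y ω = a := fun ω =>
        le_antisymm (heq ▸ (hbd ω).2) (hbd ω).1
      have : ∫ ω, Y ω ∂μ = a := by
        rw [show (fun ω => Y ω) = (fun _ => a) from funext h1]
        simp
      rw [hmean] at this; exact this.symm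
    have h1 : ∀ ω, Y ω = 0 := fun ω =>
      le_antisymm (ha0 ▸ heq ▸ (hbd ω).2) (ha0 ▸ (hbd ω).1)
    have : mgf Y μ l = 1 := by
      unfold mgf
      rw [show (fun ω => Real.exp (l * Y ω)) = (fun _ => (1:ℝ)) from
        funext fun ω => by rw [h1 ω]; simp]
      simp
    rw [this]
    exact Real.one_le_exp (by positivity)
  -- a < b
  have hba : 0 < b - a := by linarith
  set p : ℝ := -a / (b - a) with hp
  have ha0 : a ≤ 0 := by
    have : a ≤ ∫ ω, Y ω ∂μ := by
      rw [show a = ∫ _ : Ω, a ∂μ by simp]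
      exact integral_mono (integrable_const a) hYint fun ω => (hbd ω).1
    linarith [hmean ▸ this]
  have hb0 : 0 ≤ b := by
    have : ∫ ω, Y ω ∂μ ≤ b := by
      rw [show b = ∫ _ : Ω, b ∂μ by simp]
      exact integral_mono hYint (integrable_const b) fun ω => (hbd ω).2
    linarith [hmean ▸ this]
  have hp0 : 0 ≤ p := by apply div_nonneg <;> linarith
  have hp1 : p ≤ 1 := by
    rw [div_le_one hba]; linarith
  -- pointwise convexity bound
  have hconv : ∀ ω, Real.exp (l * Y ω) ≤
      (b - Y ω) / (b - a) * Real.exp (l * a) + (Y ω - a) / (b - a) * Real.exp (l * b) := by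
    intro ω
    have h1 := (hbd ω).1
    have h2 := (hbd ω).2
    have hw1 : 0 ≤ (b - Y ω) / (b - a) := by apply div_nonneg <;> linarith
    have hw2 : 0 ≤ (Y ω - a) / (b - a) := by apply div_nonneg <;> linarith
    have hsum : (b - Y ω) / (b - a) + (Y ω - a) / (b - a) = 1 := by
      field_simp
      ring
    have hcomb : (b - Y ω) / (b - a) * (l * a) + (Y ω - a) / (b - a) * (l * b) = l * Y ω := by
      field_simp
      ring
    have := convexOn_exp.2 (Set.mem_univ (l * a)) (Set.mem_univ (l * b)) hw1 hw2 hsum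
    rw [smul_eq_mul, smul_eq_mul, smul_eq_mul, smul_eq_mul, hcomb] at this
    exact this
  -- integrate
  have hint_exp : Integrable (fun ω => Real.exp (l * Y ω)) μ := by
    refine (integrable_const (Real.exp (|l| * max |a| |b|))).mono'
      ((hY.const_mul l).exp.aestronglyMeasurable) ?_
    filter_upwards with ω
    rw [Real.norm_eq_abs, abs_of_pos (Real.exp_pos _)]
    apply Real.exp_le_exp.2
    calc l * Y ω ≤ |l * Y ω| := le_abs_self _
    _ = |l| * |Y ω| := abs_mul _ _
    _ ≤ |l| * max |a| |b| := by
        apply mul_le_mul_of_nonneg_left _ (abs_nonneg l)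
        rw [abs_le]
        constructor
        · have : -(max |a| |b|) ≤ a := by
            have := neg_abs_le a; have := le_max_left |a| |b|; linarith
          linarith [(hbd ω).1]
        · have : b ≤ max |a| |b| := le_trans (le_abs_self b) (le_max_right _ _)
          linarith [(hbd ω).2]
  have hbound : mgf Y μ l ≤ (b * Real.exp (l * a) - a * Real.exp (l * b)) / (b - a) := by
    unfold mgf
    have hle : ∫ ω, Real.exp (l * Y ω) ∂μ ≤
        ∫ ω, ((b - Y ω) / (b - a) * Real.exp (l * a) + (Y ω - a) / (b - a) * Real.exp (l * b)) ∂μ := by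
      refine integral_mono hint_exp ?_ hconv
      apply Integrable.add
      · exact ((((integrable_const b).sub hYint).div_const (b-a)).mul_const _)
      · exact (((hYint.sub (integrable_const a)).div_const (b-a)).mul_const _)
    refine le_trans hle (le_of_eq ?_)
    have : ∫ ω, ((b - Y ω) / (b - a) * Real.exp (l * a) + (Y ω - a) / (b - a) * Real.exp (l * b)) ∂μ
        = (∫ ω, (b - Y ω) ∂μ) / (b - a) * Real.exp (l * a)
          + (∫ ω, (Y ω - a) ∂μ) / (b - a) * Real.exp (l * b) := by
      rw [integral_add, integral_mul_const, integral_mul_const, integral_div, integral_div]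
      · exact ((((integrable_const b).sub hYint).div_const (b-a)).mul_const _)
      · exact (((hYint.sub (integrable_const a)).div_const (b-a)).mul_const _)
    rw [this]
    have e1 : ∫ ω, (b - Y ω) ∂μ = b := by
      rw [integral_sub (integrable_const b) hYint, hmean]; simp
    have e2 : ∫ ω, (Y ω - a) ∂μ = -a := by
      rw [integral_sub hYint (integrable_const a), hmean]; simp
    rw [e1, e2]
    ring
  refine le_trans hbound ?_
  -- now the analytic step
  have hkey : (b * Real.exp (l * a) - a * Real.exp (l * b)) / (b - a)
      = Real.exp (l * a) * (1 - p + p * Real.exp (l * (b - a))) := by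
    rw [show l * b = l * a + l * (b - a) by ring, Real.exp_add]
    rw [hp]
    field_simp [hp]
    ring
  rw [hkey]
  have hDpos : 0 < 1 - p + p * Real.exp (l * (b - a)) := by
    rcases eq_or_lt_of_le hp1 with h1 | h1
    · rw [h1]; simp [Real.exp_pos]
    · have : 0 ≤ p * Real.exp (l * (b - a)) := by positivity
      linarith
  have hlog := hoeffding_phi_le p hp0 hp1 (l * (b - a))
  have : Real.exp (l * a) * (1 - p + p * Real.exp (l * (b - a)))
      = Real.exp (l * a + Real.log (1 - p + p * Real.exp (l * (b - a)))) := by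
    rw [Real.exp_add, Real.exp_log hDpos]
  rw [this]
  apply Real.exp_le_exp.2
  have hpa : l * a + p * (l * (b - a)) = 0 := by
    rw [hp]
    field_simp [hp]
    ring
  nlinarith [hlog]


/-- Hoeffding tail bound for iid bounded variables. -/
lemma hoeffding_tail {Ω 𝒳 : Type*} [MeasurableSpace Ω] [MeasurableSpace 𝒳]
    (Pr : Measure Ω) [IsProbabilityMeasure Pr]
    (X : ℕ → Ω → 𝒳) (hXmeas : ∀ k, Measurable (X k))
    (hindep : iIndepFun X Pr)
    (hident : ∀ k, 1 ≤ k → IdentDistrib (X k) (X 1) Pr Pr)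
    (g : 𝒳 → ℝ) (hg : Measurable g)
    (B₀ : ℝ) (hB₀ : 0 < B₀) (hbd : ∀ x y, |g x - g y| ≤ B₀)
    (m : ℝ) (hm : m = ∫ ω, g (X 1 ω) ∂Pr)
    (δ : ℝ) (hδ : 0 < δ) (t : ℕ) (ht : 1 ≤ t) :
    Pr {ω | (t : ℝ) * δ ≤ ∑ k ∈ Finset.Icc 1 t, (g (X k ω) - m)} ≤
      ENNReal.ofReal (Real.exp (-(2 * δ ^ 2 / B₀ ^ 2) * t)) := by
  have hne : Nonempty Ω := by
    by_contra hc
    rw [not_nonempty_iff] at hc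
    have := measure_univ (μ := Pr); simp [Set.univ_eq_empty_iff.2 hc] at this
  obtain ⟨ω₀⟩ := hne
  have hXne : Nonempty 𝒳 := ⟨X 1 ω₀⟩
  -- the infimum of the range of g
  have hbdd : BddBelow (Set.range g) := by
    refine ⟨g (Classical.arbitrary 𝒳) - B₀, ?_⟩
    rintro y ⟨x, rfl⟩
    have := hbd (Classical.arbitrary 𝒳) x
    rw [abs_le] at this
    linarith [this.1]
  set a₀ : ℝ := sInf (Set.range g) with ha₀
  have hga : ∀ x, a₀ ≤ g x := fun x => csInf_le hbdd ⟨x, rfl⟩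
  have hgb : ∀ x, g x ≤ a₀ + B₀ := by
    intro x
    have : g x - B₀ ≤ a₀ := by
      refine le_csInf ⟨g x, ⟨x, rfl⟩⟩ ?_
      rintro y ⟨z, rfl⟩
      have := hbd x z
      rw [abs_le] at this
      linarith [this.1]
    linarith
  -- centered variables
  set Y : ℕ → Ω → ℝ := fun k ω => g (X k ω) - m with hY
  have hYmeas : ∀ k, Measurable (Y k) := fun k => (hg.comp (hXmeas k)).sub_const m
  have hYindep : iIndepFun Y Pr :=
    hindep.comp (fun _ => fun x => g x - m) (fun _ => hg.sub_const m)
  have hgint : ∀ k, Integrable (fun ω => g (X k ω)) Pr := by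
    intro k
    refine (integrable_const (|a₀| + B₀)).mono'
      (hg.comp (hXmeas k)).aestronglyMeasurable ?_
    filter_upwards with ω
    rw [Real.norm_eq_abs]
    have h1 := hga (X k ω); have h2 := hgb (X k ω)
    have hL := neg_abs_le a₀; have hU := le_abs_self a₀
    rw [abs_le]
    constructor <;> linarith
  have hYint : ∀ k, Integrable (Y k) Pr := fun k => (hgint k).sub (integrable_const m)
  -- mean of Y k is 0
  have hYmean : ∀ k, 1 ≤ k → ∫ ω, Y k ω ∂Pr = 0 := by
    intro k hk
    have hid : IdentDistrib (fun ω => g (X k ω)) (fun ω => g (X 1 ω)) Pr Pr :=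
      (hident k hk).comp hg
    have heq : ∫ ω, g (X k ω) ∂Pr = ∫ ω, g (X 1 ω) ∂Pr := hid.integral_eq
    have : ∫ ω, Y k ω ∂Pr = (∫ ω, g (X k ω) ∂Pr) - ∫ _, m ∂Pr :=
      integral_sub (hgint k) (integrable_const m)
    rw [this, heq, ← hm]
    simp
  -- mgf bound for each Y k
  set l : ℝ := 4 * δ / B₀ ^ 2 with hl
  have hl0 : 0 ≤ l := by positivity
  have hmgf : ∀ k, 1 ≤ k → mgf (Y k) Pr l ≤ Real.exp (l ^ 2 * B₀ ^ 2 / 8) := by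
    intro k hk
    have hmem : ∀ ω, Y k ω ∈ Set.Icc (a₀ - m) (a₀ - m + B₀) := by
      intro ω
      constructor
      · show a₀ - m ≤ g (X k ω) - m
        linarith [hga (X k ω)]
      · show g (X k ω) - m ≤ a₀ - m + B₀
        linarith [hgb (X k ω)]
    have := hoeffding_mgf_le Pr (Y k) (hYmeas k) (a₀ - m) (a₀ - m + B₀) hmem (hYmean k hk) l
    have harg : (a₀ - m + B₀ - (a₀ - m)) = B₀ := by ring
    rwa [harg] at this
  have hexpint : ∀ k, Integrable (fun ω => Real.exp (l * Y k ω)) Pr := by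
    intro k
    refine (integrable_const (Real.exp (|l| * (|a₀| + |m| + B₀)))).mono'
      (((hYmeas k).const_mul l).exp.aestronglyMeasurable) ?_
    filter_upwards with ω
    rw [Real.norm_eq_abs, abs_of_pos (Real.exp_pos _)]
    apply Real.exp_le_exp.2
    calc l * Y k ω ≤ |l * Y k ω| := le_abs_self _
    _ = |l| * |Y k ω| := abs_mul _ _
    _ ≤ |l| * (|a₀| + |m| + B₀) := by
        apply mul_le_mul_of_nonneg_left _ (abs_nonneg l)
        have h1 := hga (X k ω); have h2 := hgb (X k ω)
        have hL := neg_abs_le a₀; have hU := le_abs_self a₀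
        have hm1 := neg_abs_le m; have hm2 := le_abs_self m
        rw [abs_le]
        constructor
        · show -(|a₀| + |m| + B₀) ≤ g (X k ω) - m
          linarith
        · show g (X k ω) - m ≤ |a₀| + |m| + B₀
          linarith
  set S : Ω → ℝ := ∑ k ∈ Finset.Icc 1 t, Y k with hS
  have hSint : Integrable (fun ω => Real.exp (l * S ω)) Pr :=
    hYindep.integrable_exp_mul_sum hYmeas (fun k _ => hexpint k)
  have hchern := measure_ge_le_exp_mul_mgf (μ := Pr) (X := S) ((t : ℝ) * δ) hl0 hSint
  have hmgfS : mgf S Pr l = ∏ k ∈ Finset.Icc 1 t, mgf (Y k) Pr l := hYindep.mgf_sum hYmeas _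
  have hmgfS_le : mgf S Pr l ≤ Real.exp (l ^ 2 * B₀ ^ 2 / 8) ^ t := by
    rw [hmgfS]
    calc ∏ k ∈ Finset.Icc 1 t, mgf (Y k) Pr l
        ≤ ∏ k ∈ Finset.Icc 1 t, Real.exp (l ^ 2 * B₀ ^ 2 / 8) :=
          Finset.prod_le_prod (fun k _ => mgf_nonneg) (fun k hk => hmgf k (Finset.mem_Icc.1 hk).1)
    _ = Real.exp (l ^ 2 * B₀ ^ 2 / 8) ^ t := by
          rw [Finset.prod_const, Nat.card_Icc, Nat.add_sub_cancel]
  have hset : {ω | (t : ℝ) * δ ≤ ∑ k ∈ Finset.Icc 1 t, (g (X k ω) - m)}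
      = {ω | (t : ℝ) * δ ≤ S ω} := by
    ext ω
    simp only [Set.mem_setOf_eq, hS, Finset.sum_apply]
    exact Iff.rfl
  rw [hset]
  have htop : Pr {ω | (t : ℝ) * δ ≤ S ω} ≠ ⊤ := measure_ne_top _ _
  rw [← ENNReal.ofReal_toReal htop]
  apply ENNReal.ofReal_le_ofReal
  calc (Pr {ω | (t : ℝ) * δ ≤ S ω}).toReal
      ≤ Real.exp (-l * ((t : ℝ) * δ)) * mgf S Pr l := hchern
  _ ≤ Real.exp (-l * ((t : ℝ) * δ)) * Real.exp (l ^ 2 * B₀ ^ 2 / 8) ^ t :=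
        mul_le_mul_of_nonneg_left hmgfS_le (Real.exp_pos _).le
  _ = Real.exp (-(2 * δ ^ 2 / B₀ ^ 2) * t) := by
        rw [← Real.exp_nat_mul, ← Real.exp_add]
        congr 1
        have hB : (B₀ : ℝ) ^ 2 ≠ 0 := by positivity
        rw [hl]
        field_simp [hl]
        ring


lemma geom_bound (c : ℝ) (hc : 0 < c) (n : ℕ) (hn : 1 ≤ n) :
    ∑ t ∈ Finset.Icc 1 (n - 1), Real.exp (-c * t) ≤
      (1 - Real.exp (-c * n)) / (Real.exp c - 1) := by
  set r := Real.exp (-c) with hr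
  have hr0 : 0 < r := Real.exp_pos _
  have hr1 : r < 1 := by
    rw [hr, ← Real.exp_zero]
    exact Real.exp_lt_exp.2 (by linarith)
  have hrw : ∀ t : ℕ, Real.exp (-c * t) = r ^ t := by
    intro t
    rw [show -c * (t : ℝ) = (t : ℝ) * (-c) by ring, Real.exp_nat_mul, hr]
  have hEc : Real.exp c - 1 = (1 - r) / r := by
    have h1 : Real.exp c = r⁻¹ := by rw [hr, Real.exp_neg, inv_inv]
    rw [h1]
    field_simp
  simp only [hrw]
  rw [hEc, div_div_eq_mul_div, le_div_iff₀ (by linarith : (0:ℝ) < 1 - r)]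
  have hsum : ∑ t ∈ Finset.Icc 1 (n - 1), r ^ t = r * (1 - r ^ (n - 1)) / (1 - r) := by
    rw [← Finset.Ico_add_one_right_eq_Icc, Finset.sum_Ico_eq_sum_range]
    have h2 : n - 1 + 1 - 1 = n - 1 := by omega
    rw [h2]
    simp only [pow_add, pow_one]
    rw [← Finset.mul_sum, geom_sum_eq (ne_of_lt hr1)]
    have hne : r - 1 ≠ 0 := by linarith
    have hne2 : (1 : ℝ) - r ≠ 0 := by linarith
    rw [mul_div_assoc', div_eq_div_iff hne hne2]
    ring
  rw [hsum, div_mul_cancel₀ _ (by linarith : (1:ℝ) - r ≠ 0)]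
  have hpow : r ^ n ≤ r ^ (n - 1) := pow_le_pow_of_le_one hr0.le hr1.le (by omega)
  nlinarith [hr0]

lemma summable_term (c : ℝ) (hc : 0 < c) (η : ℕ) (hη : 2 ≤ η) :
    Summable (fun k : ℕ => (η : ℝ) ^ k * Real.exp (-c * (η : ℝ) ^ k)) := by
  have hη1 : (1 : ℝ) ≤ (η : ℝ) := by exact_mod_cast Nat.one_le_of_lt hη
  have hη2 : (2 : ℝ) ≤ (η : ℝ) := by exact_mod_cast hη
  have hηk1 : ∀ k : ℕ, (k : ℝ) + 1 ≤ (η : ℝ) ^ k := by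
    intro k
    induction k with
    | zero => simp
    | succ k ih =>
      have h1 : (1 : ℝ) ≤ (η : ℝ) ^ k := one_le_pow₀ hη1
      have : (η : ℝ) ^ (k + 1) = η * η ^ k := by ring
      rw [this]
      push_cast
      nlinarith
  set q := Real.exp (-(c / 2)) with hq
  have hq0 : 0 < q := Real.exp_pos _
  have hq1 : q < 1 := by
    rw [hq, ← Real.exp_zero]
    exact Real.exp_lt_exp.2 (by linarith)
  refine Summable.of_nonneg_of_le (fun k => by positivity)
    (fun k => ?_) (((summable_geometric_of_lt_one hq0.le hq1).mul_left (2 / c)))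
  have hpk : (0 : ℝ) < (η : ℝ) ^ k := by positivity
  have hsplit : Real.exp (-c * (η : ℝ) ^ k)
      = Real.exp (-(c / 2) * (η : ℝ) ^ k) * Real.exp (-(c / 2) * (η : ℝ) ^ k) := by
    rw [← Real.exp_add]; congr 1; ring
  have h1 : (η : ℝ) ^ k * Real.exp (-(c / 2) * (η : ℝ) ^ k) ≤ 2 / c := by
    have hxe : c / 2 * (η : ℝ) ^ k ≤ Real.exp (c / 2 * (η : ℝ) ^ k) := by
      have := Real.add_one_le_exp (c / 2 * (η : ℝ) ^ k)
      nlinarith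
    rw [show -(c / 2) * (η : ℝ) ^ k = -(c / 2 * (η : ℝ) ^ k) by ring, Real.exp_neg]
    rw [mul_inv_le_iff₀ (Real.exp_pos _), div_mul_eq_mul_div, le_div_iff₀ hc]
    nlinarith [hxe]
  have h2 : Real.exp (-(c / 2) * (η : ℝ) ^ k) ≤ q ^ k := by
    rw [hq, ← Real.exp_nat_mul]
    apply Real.exp_le_exp.2
    have := hηk1 k
    nlinarith
  calc (η : ℝ) ^ k * Real.exp (-c * (η : ℝ) ^ k)
      = ((η : ℝ) ^ k * Real.exp (-(c / 2) * (η : ℝ) ^ k)) * Real.exp (-(c / 2) * (η : ℝ) ^ k) := by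
        rw [hsplit]; ring
  _ ≤ (2 / c) * q ^ k := by
      apply mul_le_mul h1 h2 (Real.exp_pos _).le (by positivity)


lemma exists_le_weighted_sum {ι : Type*} [Fintype ι] [Nonempty ι] (w d : ι → ℝ)
    (hw : ∀ i, 0 ≤ w i) (hsum : ∑ i, w i = 1) :
    (∃ i, d i ≤ ∑ j, w j * d j) ∧ (∃ i, ∑ j, w j * d j ≤ d i) := by
  obtain ⟨i₀, -, hmin⟩ := Finset.exists_min_image Finset.univ d ⟨Classical.arbitrary ι, Finset.mem_univ _⟩
  obtain ⟨i₁, -, hmax⟩ := Finset.exists_max_image Finset.univ d ⟨Classical.arbitrary ι, Finset.mem_univ _⟩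
  constructor
  · refine ⟨i₀, ?_⟩
    calc d i₀ = ∑ j, w j * d i₀ := by rw [← Finset.sum_mul, hsum, one_mul]
    _ ≤ ∑ j, w j * d j :=
        Finset.sum_le_sum fun j _ => mul_le_mul_of_nonneg_left (hmin j (Finset.mem_univ _)) (hw j)
  · refine ⟨i₁, ?_⟩
    calc ∑ j, w j * d j ≤ ∑ j, w j * d i₁ :=
        Finset.sum_le_sum fun j _ => mul_le_mul_of_nonneg_left (hmax j (Finset.mem_univ _)) (hw j)
    _ = d i₁ := by rw [← Finset.sum_mul, hsum, one_mul]

section main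
variable
    {Ω : Type*} [MeasurableSpace Ω] (Pr : Measure Ω) [IsProbabilityMeasure Pr]
    {𝒳 : Type*} [MeasurableSpace 𝒳]
    (X : ℕ → Ω → 𝒳) (hXmeas : ∀ k, Measurable (X k))
    (hindep : iIndepFun X Pr)
    (hident : ∀ k, 1 ≤ k → IdentDistrib (X k) (X 1) Pr Pr)
    {𝒮 𝒜 : Type*} [Fintype 𝒮] [Fintype 𝒜] [Nonempty 𝒮] [Nonempty 𝒜]
    (f : 𝒮 → 𝒜 → 𝒳 → ℝ) (hfmeas : ∀ s a, Measurable (f s a))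
    (B₀ : ℝ) (hB₀ : 0 < B₀)
    (hbd : ∀ s a x y, |f s a x - f s a y| ≤ B₀)
    (μ : 𝒮 → 𝒜 → ℝ) (hμ : ∀ s a, μ s a = ∫ ω, f s a (X 1 ω) ∂Pr)
    (θ : ℕ → Ω → 𝒮 → 𝒜 → ℝ)
    (hθ : ∀ t ω s a, θ t ω s a = (∑ k ∈ Finset.Icc 1 t, f s a (X k ω)) / t)
    (𝓑 : Finset ((𝒮 → 𝒜) × (𝒮 → ℝ)))
    (hπ : ∀ β ∈ 𝓑, (∀ s, 0 ≤ β.2 s) ∧ ∑ s, β.2 s = 1)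
    (ρ : ((𝒮 → 𝒜) × (𝒮 → ℝ)) → (𝒮 → 𝒜 → ℝ) → ℝ)
    (hρ : ∀ β Θ, ρ β Θ = ∑ s, β.2 s * Θ s (β.1 s))
    (βs : (𝒮 → 𝒜) × (𝒮 → ℝ)) (hβs : βs ∈ 𝓑)
    (Δ₁ : ℝ) (hΔ₁ : 0 < Δ₁)
    (hgap : ∀ β ∈ 𝓑, β ≠ βs → ρ β μ + Δ₁ ≤ ρ βs μ)
    (F : ℕ → Set Ω)
    (hF : ∀ t, F t = {ω | ∃ β ∈ 𝓑, β ≠ βs ∧ ρ βs (θ t ω) ≤ ρ β (θ t ω)})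

include hθ hfmeas hXmeas in
lemma thetameas : ∀ t s a, Measurable (fun ω => θ t ω s a) := by
  intro t s a
  have : (fun ω => θ t ω s a) = fun ω => (∑ k ∈ Finset.Icc 1 t, f s a (X k ω)) / (t : ℝ) :=
    funext fun ω => hθ t ω s a
  rw [this]
  exact (Finset.measurable_sum _ fun k _ => (hfmeas s a).comp (hXmeas k)).div_const _

include hθ hfmeas hXmeas hρ hF in
lemma Fmeas : ∀ t, MeasurableSet (F t) := by
  intro t
  have hθm := thetameas X hXmeas f hfmeas θ hθ
  have hρm : ∀ β, Measurable (fun ω => ρ β (θ t ω)) := by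
    intro β
    have : (fun ω => ρ β (θ t ω)) = fun ω => ∑ s, β.2 s * θ t ω s (β.1 s) :=
      funext fun ω => hρ β (θ t ω)
    rw [this]
    exact Finset.measurable_sum _ fun s _ => ((hθm t s (β.1 s)).const_mul _)
  have : F t = ⋃ β ∈ (𝓑 : Set _), {ω | β ≠ βs ∧ ρ βs (θ t ω) ≤ ρ β (θ t ω)} := by
    rw [hF t]
    ext ω
    simp only [Set.mem_setOf_eq, Set.mem_iUnion, Finset.mem_coe, exists_prop]
  rw [this]
  refine MeasurableSet.biUnion 𝓑.countable_toSet fun β _ => ?_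
  by_cases hb : β = βs
  · simp [hb]
  · have : {ω | β ≠ βs ∧ ρ βs (θ t ω) ≤ ρ β (θ t ω)} = {ω | ρ βs (θ t ω) ≤ ρ β (θ t ω)} := by
      ext ω; simp [hb]
    rw [this]
    exact measurableSet_le (hρm βs) (hρm β)

include hXmeas hindep hident hfmeas hB₀ hbd hμ hθ hπ hρ hβs hΔ₁ hgap hF in
lemma probF : ∀ t, 1 ≤ t → Pr (F t) ≤
    ENNReal.ofReal ((1 + (Fintype.card 𝒜 : ℝ)) * (Fintype.card 𝒮 : ℝ) *
      Real.exp (-(Δ₁ ^ 2 / (2 * B₀ ^ 2)) * t)) := by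
  intro t ht
  set c : ℝ := Δ₁ ^ 2 / (2 * B₀ ^ 2) with hc
  set Em : 𝒮 → Set Ω := fun s => {ω | θ t ω s (βs.1 s) - μ s (βs.1 s) ≤ -(Δ₁ / 2)} with hEm
  set Ep : 𝒮 × 𝒜 → Set Ω := fun sa => {ω | Δ₁ / 2 ≤ θ t ω sa.1 sa.2 - μ sa.1 sa.2} with hEp
  -- inclusion
  have hsub : F t ⊆ (⋃ s, Em s) ∪ ⋃ sa, Ep sa := by
    intro ω hω
    rw [hF t] at hω
    obtain ⟨β, hβm, hβne, hle⟩ := hω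
    have hgapβ := hgap β hβm hβne
    obtain ⟨hπs0, hπs1⟩ := hπ βs hβs
    obtain ⟨hπβ0, hπβ1⟩ := hπ β hβm
    set d1 : 𝒮 → ℝ := fun s => θ t ω s (βs.1 s) - μ s (βs.1 s) with hd1
    set d2 : 𝒮 → ℝ := fun s => θ t ω s (β.1 s) - μ s (β.1 s) with hd2
    have h1 : ρ βs (θ t ω) - ρ βs μ = ∑ s, βs.2 s * d1 s := by
      rw [hρ, hρ, ← Finset.sum_sub_distrib]
      exact Finset.sum_congr rfl fun s _ => by simp only [hd1]; ring
    have h2 : ρ β (θ t ω) - ρ β μ = ∑ s, β.2 s * d2 s := by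
      rw [hρ, hρ, ← Finset.sum_sub_distrib]
      exact Finset.sum_congr rfl fun s _ => by simp only [hd2]; ring
    rcases le_or_gt (∑ s, βs.2 s * d1 s) (-(Δ₁ / 2)) with hcase | hcase
    · left
      obtain ⟨⟨s₀, hs₀⟩, -⟩ := exists_le_weighted_sum βs.2 d1 hπs0 hπs1
      refine Set.mem_iUnion.2 ⟨s₀, ?_⟩
      show θ t ω s₀ (βs.1 s₀) - μ s₀ (βs.1 s₀) ≤ -(Δ₁ / 2)
      have hs₀' : θ t ω s₀ (βs.1 s₀) - μ s₀ (βs.1 s₀) ≤ ∑ j, βs.2 j * d1 j := hs₀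
      linarith
    · right
      have hge : Δ₁ / 2 ≤ ∑ s, β.2 s * d2 s := by linarith
      obtain ⟨-, ⟨s₁, hs₁⟩⟩ := exists_le_weighted_sum β.2 d2 hπβ0 hπβ1
      refine Set.mem_iUnion.2 ⟨(s₁, β.1 s₁), ?_⟩
      show Δ₁ / 2 ≤ θ t ω s₁ (β.1 s₁) - μ s₁ (β.1 s₁)
      have hs₁' : ∑ j, β.2 j * d2 j ≤ θ t ω s₁ (β.1 s₁) - μ s₁ (β.1 s₁) := hs₁
      linarith
  -- individual bounds
  have hEpB : ∀ sa : 𝒮 × 𝒜, Pr (Ep sa) ≤ ENNReal.ofReal (Real.exp (-c * t)) := by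
    rintro ⟨s, a⟩
    have key := hoeffding_tail Pr X hXmeas hindep hident (f s a) (hfmeas s a) B₀ hB₀
      (hbd s a) (μ s a) (hμ s a) (Δ₁ / 2) (by linarith) t ht
    have hexp : Real.exp (-(2 * (Δ₁ / 2) ^ 2 / B₀ ^ 2) * t) = Real.exp (-c * t) := by
      congr 1; rw [hc]; ring
    rw [hexp] at key
    refine le_trans (measure_mono ?_) key
    intro ω hω
    simp only [hEp, Set.mem_setOf_eq] at hω
    rw [hθ t ω s a] at hω
    simp only [Set.mem_setOf_eq]
    have htpos : (0 : ℝ) < t := by exact_mod_cast ht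
    have h0 : Δ₁ / 2 + μ s a ≤ (∑ k ∈ Finset.Icc 1 t, f s a (X k ω)) / t := by linarith
    have h1 : (Δ₁ / 2 + μ s a) * t ≤ ∑ k ∈ Finset.Icc 1 t, f s a (X k ω) :=
      (le_div_iff₀ htpos).1 h0
    rw [Finset.sum_sub_distrib, Finset.sum_const, Nat.card_Icc, Nat.add_sub_cancel, nsmul_eq_mul]
    linarith
  have hEmB : ∀ s : 𝒮, Pr (Em s) ≤ ENNReal.ofReal (Real.exp (-c * t)) := by
    intro s
    have hnegbd : ∀ x y, |(-f s (βs.1 s) x) - (-f s (βs.1 s) y)| ≤ B₀ := by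
      intro x y
      rw [show (-f s (βs.1 s) x) - (-f s (βs.1 s) y) = -(f s (βs.1 s) x - f s (βs.1 s) y) by ring,
        abs_neg]
      exact hbd s (βs.1 s) x y
    have hmneg : -μ s (βs.1 s) = ∫ ω, -f s (βs.1 s) (X 1 ω) ∂Pr := by
      rw [hμ s (βs.1 s), ← integral_neg]
    have key := hoeffding_tail Pr X hXmeas hindep hident (fun x => -f s (βs.1 s) x)
      ((hfmeas s (βs.1 s)).neg) B₀ hB₀ hnegbd (-μ s (βs.1 s)) hmneg (Δ₁ / 2) (by linarith) t ht
    have hexp : Real.exp (-(2 * (Δ₁ / 2) ^ 2 / B₀ ^ 2) * t) = Real.exp (-c * t) := by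
      congr 1; rw [hc]; ring
    rw [hexp] at key
    refine le_trans (measure_mono ?_) key
    intro ω hω
    simp only [hEm, Set.mem_setOf_eq] at hω
    rw [hθ t ω s (βs.1 s)] at hω
    simp only [Set.mem_setOf_eq]
    have htpos : (0 : ℝ) < t := by exact_mod_cast ht
    have h0 : (∑ k ∈ Finset.Icc 1 t, f s (βs.1 s) (X k ω)) / t ≤ μ s (βs.1 s) - Δ₁ / 2 := by
      linarith
    have h1 : (∑ k ∈ Finset.Icc 1 t, f s (βs.1 s) (X k ω)) ≤ (μ s (βs.1 s) - Δ₁ / 2) * t :=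
      (div_le_iff₀ htpos).1 h0
    have hsum : ∑ k ∈ Finset.Icc 1 t, (-f s (βs.1 s) (X k ω) - -μ s (βs.1 s))
        = -(∑ k ∈ Finset.Icc 1 t, f s (βs.1 s) (X k ω)) + t * μ s (βs.1 s) := by
      rw [Finset.sum_sub_distrib, ← Finset.sum_neg_distrib, Finset.sum_const, Nat.card_Icc,
        Nat.add_sub_cancel, nsmul_eq_mul]
      ring
    rw [hsum]
    linarith
  -- union bound
  calc Pr (F t) ≤ Pr ((⋃ s, Em s) ∪ ⋃ sa, Ep sa) := measure_mono hsub
  _ ≤ Pr (⋃ s, Em s) + Pr (⋃ sa, Ep sa) := measure_union_le _ _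
  _ ≤ (∑ s, Pr (Em s)) + ∑ sa : 𝒮 × 𝒜, Pr (Ep sa) :=
      add_le_add (measure_iUnion_fintype_le _ _) (measure_iUnion_fintype_le _ _)
  _ ≤ (∑ _s : 𝒮, ENNReal.ofReal (Real.exp (-c * t)))
      + ∑ _sa : (𝒮 × 𝒜), ENNReal.ofReal (Real.exp (-c * t)) :=
      add_le_add (Finset.sum_le_sum fun s _ => hEmB s) (Finset.sum_le_sum fun sa _ => hEpB sa)
  _ = (Fintype.card 𝒮 : ℝ≥0∞) * ENNReal.ofReal (Real.exp (-c * t))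
      + ((Fintype.card 𝒮 : ℝ≥0∞) * (Fintype.card 𝒜 : ℝ≥0∞)) * ENNReal.ofReal (Real.exp (-c * t)) := by
      rw [Finset.sum_const, Finset.sum_const, Finset.card_univ, Finset.card_univ, nsmul_eq_mul,
        nsmul_eq_mul, Fintype.card_prod]
      push_cast
      ring
  _ = ENNReal.ofReal ((1 + (Fintype.card 𝒜 : ℝ)) * (Fintype.card 𝒮 : ℝ) * Real.exp (-c * t)) := by
      have e1 : (Fintype.card 𝒮 : ℝ≥0∞) * ENNReal.ofReal (Real.exp (-c * t))
          = ENNReal.ofReal ((Fintype.card 𝒮 : ℝ) * Real.exp (-c * t)) := by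
        rw [ENNReal.ofReal_mul (Nat.cast_nonneg _), ENNReal.ofReal_natCast]
      have e2 : ((Fintype.card 𝒮 : ℝ≥0∞) * (Fintype.card 𝒜 : ℝ≥0∞))
            * ENNReal.ofReal (Real.exp (-c * t))
          = ENNReal.ofReal (((Fintype.card 𝒮 : ℝ) * (Fintype.card 𝒜 : ℝ))
            * Real.exp (-c * t)) := by
        rw [ENNReal.ofReal_mul (by positivity), ENNReal.ofReal_mul (Nat.cast_nonneg _),
          ENNReal.ofReal_natCast, ENNReal.ofReal_natCast]
      rw [e1, e2, ← ENNReal.ofReal_add (by positivity) (by positivity)]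
      congr 1
      ring


end main

/-- Bound on the expected number of slots in which Epoch-LPSM plays a non-optimal
policy: it can err at each of the first `n₀` slots where the failure event occurs,
and during the whole `k`-th epoch (of length `n₀(η^k − η^{k−1})`) if the failure
event occurs at the epoch's starting slot `n₀ η^{k−1}`. -/
theorem epoch_lpsm_expected_nonoptimal_slots
    {Ω : Type*} [MeasurableSpace Ω] (Pr : Measure Ω) [IsProbabilityMeasure Pr]
    {𝒳 : Type*} [MeasurableSpace 𝒳]
    (X : ℕ → Ω → 𝒳) (hXmeas : ∀ k, Measurable (X k))
    (hindep : iIndepFun X Pr)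
    (hident : ∀ k, 1 ≤ k → IdentDistrib (X k) (X 1) Pr Pr)
    {𝒮 𝒜 : Type*} [Fintype 𝒮] [Fintype 𝒜] [Nonempty 𝒮] [Nonempty 𝒜]
    (f : 𝒮 → 𝒜 → 𝒳 → ℝ) (hfmeas : ∀ s a, Measurable (f s a))
    (B₀ : ℝ) (hB₀ : 0 < B₀)
    (hbd : ∀ s a x y, |f s a x - f s a y| ≤ B₀)
    (μ : 𝒮 → 𝒜 → ℝ) (hμ : ∀ s a, μ s a = ∫ ω, f s a (X 1 ω) ∂Pr)
    (θ : ℕ → Ω → 𝒮 → 𝒜 → ℝ)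
    (hθ : ∀ t ω s a, θ t ω s a = (∑ k ∈ Finset.Icc 1 t, f s a (X k ω)) / t)
    (𝓑 : Finset ((𝒮 → 𝒜) × (𝒮 → ℝ)))
    (hπ : ∀ β ∈ 𝓑, (∀ s, 0 ≤ β.2 s) ∧ ∑ s, β.2 s = 1)
    (ρ : ((𝒮 → 𝒜) × (𝒮 → ℝ)) → (𝒮 → 𝒜 → ℝ) → ℝ)
    (hρ : ∀ β Θ, ρ β Θ = ∑ s, β.2 s * Θ s (β.1 s))
    (βs : (𝒮 → 𝒜) × (𝒮 → ℝ)) (hβs : βs ∈ 𝓑)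
    (Δ₁ : ℝ) (hΔ₁ : 0 < Δ₁)
    (hgap : ∀ β ∈ 𝓑, β ≠ βs → ρ β μ + Δ₁ ≤ ρ βs μ)
    (F : ℕ → Set Ω)
    (hF : ∀ t, F t = {ω | ∃ β ∈ 𝓑, β ≠ βs ∧ ρ βs (θ t ω) ≤ ρ β (θ t ω)})
    (n₀ η : ℕ) (hn₀ : 1 ≤ n₀) (hη : 2 ≤ η)
    (σ : ℝ)
    (hσ : σ = ∑' k : ℕ, (η : ℝ) ^ k *
        Real.exp (-(Δ₁ ^ 2 / (2 * B₀ ^ 2)) * n₀ * (η : ℝ) ^ k)) :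
    Summable (fun k : ℕ => (η : ℝ) ^ k *
        Real.exp (-(Δ₁ ^ 2 / (2 * B₀ ^ 2)) * n₀ * (η : ℝ) ^ k)) ∧
    ∫⁻ ω, (1 + (∑ t ∈ Finset.Icc 1 (n₀ - 1),
            (F t).indicator (fun _ => (1 : ℝ≥0∞)) ω)
          + ∑' k : ℕ, ((n₀ * (η ^ (k + 1) - η ^ k) : ℕ) : ℝ≥0∞) *
            (F (n₀ * η ^ k)).indicator (fun _ => (1 : ℝ≥0∞)) ω) ∂Pr
      ≤ ENNReal.ofReal (1 +
          (1 + (Fintype.card 𝒜 : ℝ)) * (Fintype.card 𝒮 : ℝ) *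
            (1 - Real.exp (-(Δ₁ ^ 2 / (2 * B₀ ^ 2)) * n₀)) /
            (Real.exp (Δ₁ ^ 2 / (2 * B₀ ^ 2)) - 1)
          + ((η : ℝ) - 1) * (1 + (Fintype.card 𝒜 : ℝ)) * (Fintype.card 𝒮 : ℝ) *
            n₀ * σ) := by
  have hFmeas := Fmeas X hXmeas f hfmeas θ hθ 𝓑 ρ hρ βs F hF
  have hPF := probF Pr X hXmeas hindep hident f hfmeas B₀ hB₀ hbd μ hμ θ hθ 𝓑 hπ ρ hρ βs hβs
    Δ₁ hΔ₁ hgap F hF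
  set c : ℝ := Δ₁ ^ 2 / (2 * B₀ ^ 2) with hcdef
  have hcpos : 0 < c := by positivity
  have hn₀R : (0 : ℝ) < n₀ := by exact_mod_cast hn₀
  have hsummable : Summable (fun k : ℕ => (η : ℝ) ^ k * Real.exp (-c * n₀ * (η : ℝ) ^ k)) := by
    have h := summable_term (c * n₀) (by positivity) η hη
    refine h.congr fun k => ?_
    congr 2
    ring
  refine ⟨hsummable, ?_⟩
  -- measurability of indicators
  have hindmeas : ∀ t : ℕ, Measurable ((F t).indicator (fun _ => (1 : ℝ≥0∞))) :=
    fun t => measurable_const.indicator (hFmeas t)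
  have hS1meas : Measurable fun ω =>
      ∑ t ∈ Finset.Icc 1 (n₀ - 1), (F t).indicator (fun _ => (1 : ℝ≥0∞)) ω :=
    Finset.measurable_sum _ fun t _ => hindmeas t
  have hLHS : (∫⁻ ω, (1 + (∑ t ∈ Finset.Icc 1 (n₀ - 1),
            (F t).indicator (fun _ => (1 : ℝ≥0∞)) ω)
          + ∑' k : ℕ, ((n₀ * (η ^ (k + 1) - η ^ k) : ℕ) : ℝ≥0∞) *
            (F (n₀ * η ^ k)).indicator (fun _ => (1 : ℝ≥0∞)) ω) ∂Pr)
      = 1 + (∑ t ∈ Finset.Icc 1 (n₀ - 1), Pr (F t))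
        + ∑' k : ℕ, ((n₀ * (η ^ (k + 1) - η ^ k) : ℕ) : ℝ≥0∞) * Pr (F (n₀ * η ^ k)) := by
    rw [lintegral_add_left (f := fun ω => 1 + ∑ t ∈ Finset.Icc 1 (n₀ - 1),
          (F t).indicator (fun _ => (1 : ℝ≥0∞)) ω) (measurable_const.add hS1meas),
      lintegral_add_left measurable_const,
      lintegral_const, measure_univ, mul_one,
      lintegral_finset_sum _ (fun t _ => hindmeas t),
      lintegral_tsum (fun k => ((hindmeas _).const_mul _).aemeasurable)]
    congr 1
    · congr 1
      exact Finset.sum_congr rfl fun t _ => by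
        rw [lintegral_indicator_const (hFmeas t), one_mul]
    · exact tsum_congr fun k => by
        rw [lintegral_const_mul _ (hindmeas _), lintegral_indicator_const (hFmeas _), one_mul]
  rw [hLHS]
  set K : ℝ := (1 + (Fintype.card 𝒜 : ℝ)) * (Fintype.card 𝒮 : ℝ) with hKdef
  have hK0 : 0 ≤ K := by positivity
  have hb1 : (∑ t ∈ Finset.Icc 1 (n₀ - 1), Pr (F t))
      ≤ ENNReal.ofReal (K * ((1 - Real.exp (-c * n₀)) / (Real.exp c - 1))) := by
    calc ∑ t ∈ Finset.Icc 1 (n₀ - 1), Pr (F t)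
        ≤ ∑ t ∈ Finset.Icc 1 (n₀ - 1), ENNReal.ofReal (K * Real.exp (-c * t)) :=
          Finset.sum_le_sum fun t htm => hPF t (Finset.mem_Icc.1 htm).1
    _ = ENNReal.ofReal (∑ t ∈ Finset.Icc 1 (n₀ - 1), K * Real.exp (-c * t)) :=
          (ENNReal.ofReal_sum_of_nonneg fun t _ => by positivity).symm
    _ ≤ _ := by
          apply ENNReal.ofReal_le_ofReal
          rw [← Finset.mul_sum]
          exact mul_le_mul_of_nonneg_left (geom_bound c hcpos n₀ hn₀) hK0
  have hb2 : (∑' k : ℕ, ((n₀ * (η ^ (k + 1) - η ^ k) : ℕ) : ℝ≥0∞) * Pr (F (n₀ * η ^ k)))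
      ≤ ENNReal.ofReal ((((η : ℝ) - 1) * K * n₀) * σ) := by
    have hterm : ∀ k : ℕ, ((n₀ * (η ^ (k + 1) - η ^ k) : ℕ) : ℝ≥0∞) * Pr (F (n₀ * η ^ k))
        ≤ ENNReal.ofReal ((((η : ℝ) - 1) * K * n₀)
            * ((η : ℝ) ^ k * Real.exp (-c * n₀ * (η : ℝ) ^ k))) := by
      intro k
      have hηpos : 0 < η := by omega
      have ht1 : 1 ≤ n₀ * η ^ k := Nat.one_le_iff_ne_zero.2
        (Nat.mul_ne_zero (by omega) (pow_ne_zero _ (by omega)))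
      have hPFk := hPF (n₀ * η ^ k) ht1
      have hle : η ^ k ≤ η ^ (k + 1) := Nat.pow_le_pow_right (by omega) (Nat.le_succ k)
      have hcast : ((n₀ * (η ^ (k + 1) - η ^ k) : ℕ) : ℝ≥0∞)
          = ENNReal.ofReal ((n₀ : ℝ) * ((η : ℝ) ^ (k + 1) - (η : ℝ) ^ k)) := by
        rw [← ENNReal.ofReal_natCast]
        congr 1
        rw [Nat.cast_mul, Nat.cast_sub hle, Nat.cast_pow, Nat.cast_pow]
      have hexp : Real.exp (-c * ((n₀ * η ^ k : ℕ) : ℝ))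
          = Real.exp (-c * n₀ * (η : ℝ) ^ k) := by
        congr 1
        push_cast
        ring
      have hfac0 : (0 : ℝ) ≤ (n₀ : ℝ) * ((η : ℝ) ^ (k + 1) - (η : ℝ) ^ k) := by
        have : ((η : ℝ) ^ k : ℝ) ≤ (η : ℝ) ^ (k + 1) := by exact_mod_cast hle
        have := hn₀R
        nlinarith
      calc ((n₀ * (η ^ (k + 1) - η ^ k) : ℕ) : ℝ≥0∞) * Pr (F (n₀ * η ^ k))
          ≤ ENNReal.ofReal ((n₀ : ℝ) * ((η : ℝ) ^ (k + 1) - (η : ℝ) ^ k))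
            * ENNReal.ofReal (K * Real.exp (-c * ((n₀ * η ^ k : ℕ) : ℝ))) := by
            rw [hcast]
            exact mul_le_mul_right hPFk _
      _ = ENNReal.ofReal (((n₀ : ℝ) * ((η : ℝ) ^ (k + 1) - (η : ℝ) ^ k))
            * (K * Real.exp (-c * ((n₀ * η ^ k : ℕ) : ℝ)))) :=
            (ENNReal.ofReal_mul hfac0).symm
      _ = ENNReal.ofReal ((((η : ℝ) - 1) * K * n₀)
            * ((η : ℝ) ^ k * Real.exp (-c * n₀ * (η : ℝ) ^ k))) := by
            rw [hexp]
            congr 1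
            ring
    calc (∑' k : ℕ, ((n₀ * (η ^ (k + 1) - η ^ k) : ℕ) : ℝ≥0∞) * Pr (F (n₀ * η ^ k)))
        ≤ ∑' k : ℕ, ENNReal.ofReal ((((η : ℝ) - 1) * K * n₀)
            * ((η : ℝ) ^ k * Real.exp (-c * n₀ * (η : ℝ) ^ k))) := ENNReal.tsum_le_tsum hterm
    _ = ENNReal.ofReal (∑' k : ℕ, (((η : ℝ) - 1) * K * n₀)
            * ((η : ℝ) ^ k * Real.exp (-c * n₀ * (η : ℝ) ^ k))) := by
          refine (ENNReal.ofReal_tsum_of_nonneg (fun k => ?_) (hsummable.mul_left _)).symm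
          have hη1 : (1 : ℝ) ≤ (η : ℝ) := by exact_mod_cast Nat.one_le_of_lt hη
          have h1 : (0 : ℝ) ≤ (η : ℝ) - 1 := by linarith
          positivity
    _ = ENNReal.ofReal ((((η : ℝ) - 1) * K * n₀) * σ) := by
          rw [tsum_mul_left, hσ]
  have hmid0 : 0 ≤ K * ((1 - Real.exp (-c * n₀)) / (Real.exp c - 1)) := by
    have h1 : Real.exp (-c * n₀) ≤ 1 := by
      rw [← Real.exp_zero]
      apply Real.exp_le_exp.2
      nlinarith
    have h2 : 1 < Real.exp c := by
      rw [← Real.exp_zero]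
      exact Real.exp_lt_exp.2 hcpos
    exact mul_nonneg hK0 (div_nonneg (by linarith) (by linarith))
  have hσ0 : 0 ≤ σ := by
    rw [hσ]
    exact tsum_nonneg fun k => by positivity
  have hη1 : (1 : ℝ) ≤ (η : ℝ) := by exact_mod_cast Nat.one_le_of_lt hη
  have hlast0 : 0 ≤ (((η : ℝ) - 1) * K * n₀) * σ := by
    have : (0 : ℝ) ≤ (η : ℝ) - 1 := by linarith
    have := hn₀R
    positivity
  calc 1 + (∑ t ∈ Finset.Icc 1 (n₀ - 1), Pr (F t))
        + ∑' k : ℕ, ((n₀ * (η ^ (k + 1) - η ^ k) : ℕ) : ℝ≥0∞) * Pr (F (n₀ * η ^ k))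
      ≤ 1 + ENNReal.ofReal (K * ((1 - Real.exp (-c * n₀)) / (Real.exp c - 1)))
        + ENNReal.ofReal ((((η : ℝ) - 1) * K * n₀) * σ) :=
        add_le_add (add_le_add_right hb1 1) hb2
  _ = ENNReal.ofReal (1 + K * ((1 - Real.exp (-c * n₀)) / (Real.exp c - 1))
        + (((η : ℝ) - 1) * K * n₀) * σ) := by
        rw [← ENNReal.ofReal_one, ← ENNReal.ofReal_add (by norm_num) hmid0,
          ← ENNReal.ofReal_add (by positivity) hlast0]
  _ = ENNReal.ofReal (1 + K * (1 - Real.exp (-c * n₀)) / (Real.exp c - 1)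
        + ((η : ℝ) - 1) * (1 + (Fintype.card 𝒜 : ℝ)) * (Fintype.card 𝒮 : ℝ) * n₀ * σ) := by
        congr 1
        rw [hKdef]
        ring
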